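/- arXiv:2312.09385 — 2 statements merged into one kernel-verified Lean document; each statement's English description precedes it below -/
import Mathlib

section
/- If M is a totally nonnegative real matrix with no row consisting entirely of zeroes and no column consisting entirely of zeroes, then each row of M is row-convex: there do not exist a row index ℓ and column indices i < j < k with M(ℓ,i) ≠ 0, M(ℓ,j) = 0, and M(ℓ,k) ≠ 0. -/
/-- A finite real matrix is totally nonnegative if every square submatrix
(chosen by strictly increasing row and column indices) has nonnegative determinant. -/
def TotallyNonneg {n m : ℕ} (M : Matrix (Fin n) (Fin m) ℝ) : Prop :=
  ∀ (k : ℕ) (r : Fin k → Fin n) (c : Fin k → Fin m),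
    StrictMono r → StrictMono c →
      0 ≤ Matrix.det (Matrix.of fun i j => M (r i) (c j))

lemma sm2 {N : ℕ} {a b : Fin N} (h : a < b) : StrictMono ![a, b] := by
  intro x y hxy
  fin_cases x <;> fin_cases y <;> simp_all <;> omega

/-- A TN matrix with no zero row and no zero column is row-convex. -/
theorem tn_row_convex {n m : ℕ} (M : Matrix (Fin n) (Fin m) ℝ)
    (hTN : TotallyNonneg M)
    (hrow : ∀ i, ∃ j, M i j ≠ 0) (hcol : ∀ j, ∃ i, M i j ≠ 0) :
    ¬ ∃ (ℓ : Fin n) (i j k : Fin m),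
        i < j ∧ j < k ∧ M ℓ i ≠ 0 ∧ M ℓ j = 0 ∧ M ℓ k ≠ 0 := by
  rintro ⟨ℓ, i, j, k, hij, hjk, hMi, hMj, hMk⟩
  -- all entries are nonnegative (1×1 minors)
  have hnonneg : ∀ a b, 0 ≤ M a b := by
    intro a b
    have := hTN 1 (fun _ => a) (fun _ => b)
      (Subsingleton.strictMono _) (Subsingleton.strictMono _)
    simpa [Matrix.det_fin_one] using this
  have hMi' : 0 < M ℓ i := lt_of_le_of_ne (hnonneg ℓ i) (Ne.symm hMi)
  have hMk' : 0 < M ℓ k := lt_of_le_of_ne (hnonneg ℓ k) (Ne.symm hMk)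
  obtain ⟨r, hr⟩ := hcol j
  have hr' : 0 < M r j := lt_of_le_of_ne (hnonneg r j) (Ne.symm hr)
  have hrl : r ≠ ℓ := by rintro rfl; exact hr hMj
  rcases lt_or_gt_of_ne hrl with h | h
  · -- r < ℓ : use rows r, ℓ and columns i, j
    have := hTN 2 ![r, ℓ] ![i, j] (sm2 h) (sm2 hij)
    have hd : Matrix.det (Matrix.of fun x y => M (![r, ℓ] x) (![i, j] y))
        = M r i * M ℓ j - M r j * M ℓ i := by
      rw [Matrix.det_fin_two]; simp
    rw [hd, hMj] at this
    nlinarith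
  · -- ℓ < r : use rows ℓ, r and columns j, k
    have := hTN 2 ![ℓ, r] ![j, k] (sm2 h) (sm2 hjk)
    have hd : Matrix.det (Matrix.of fun x y => M (![ℓ, r] x) (![j, k] y))
        = M ℓ j * M r k - M ℓ k * M r j := by
      rw [Matrix.det_fin_two]; simp
    rw [hd, hMj] at this
    nlinarith
end

section
/- If M is a totally nonnegative real matrix with no row of all zeroes and no column of all zeroes, then M is column-convex: there do not exist a column index ℓ and row indices i < j < k with M(i,ℓ) ≠ 0, M(j,ℓ) = 0, and M(k,ℓ) ≠ 0. -/
lemma tn_entry_nonneg {n m : ℕ} {M : Matrix (Fin n) (Fin m) ℝ}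
    (hTN : TotallyNonneg M) (a : Fin n) (b : Fin m) : 0 ≤ M a b := by
  have h := hTN 1 ![a] ![b]
    (fun x y h => absurd (Subsingleton.elim x y) (ne_of_lt h))
    (fun x y h => absurd (Subsingleton.elim x y) (ne_of_lt h))
  simpa [Matrix.det_fin_one] using h

lemma tn_minor2 {n m : ℕ} {M : Matrix (Fin n) (Fin m) ℝ}
    (hTN : TotallyNonneg M) {a b : Fin n} {c d : Fin m}
    (hab : a < b) (hcd : c < d) :
    0 ≤ M a c * M b d - M a d * M b c := by
  have hr : StrictMono ![a, b] := by
    intro x y h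
    fin_cases x <;> fin_cases y <;> simp_all <;> omega
  have hc : StrictMono ![c, d] := by
    intro x y h
    fin_cases x <;> fin_cases y <;> simp_all <;> omega
  have h := hTN 2 ![a, b] ![c, d] hr hc
  simpa [Matrix.det_fin_two] using h

/-- A TN matrix with no zero row and no zero column is column-convex. -/
theorem tn_col_convex {n m : ℕ} (M : Matrix (Fin n) (Fin m) ℝ)
    (hTN : TotallyNonneg M)
    (hrow : ∀ i, ∃ j, M i j ≠ 0) (hcol : ∀ j, ∃ i, M i j ≠ 0) :
    ¬ ∃ (ℓ : Fin m) (i j k : Fin n),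
        i < j ∧ j < k ∧ M i ℓ ≠ 0 ∧ M j ℓ = 0 ∧ M k ℓ ≠ 0 := by
  rintro ⟨ℓ, i, j, k, hij, hjk, hi, hj, hk⟩
  obtain ⟨p, hp⟩ := hrow j
  have hpℓ : p ≠ ℓ := fun h => hp (h ▸ hj)
  have hi' : 0 < M i ℓ := lt_of_le_of_ne (tn_entry_nonneg hTN i ℓ) (Ne.symm hi)
  have hk' : 0 < M k ℓ := lt_of_le_of_ne (tn_entry_nonneg hTN k ℓ) (Ne.symm hk)
  have hp' : 0 < M j p := lt_of_le_of_ne (tn_entry_nonneg hTN j p) (Ne.symm hp)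
  rcases lt_or_gt_of_ne hpℓ with h | h
  · -- p < ℓ : rows i, j, cols p, ℓ
    have hm := tn_minor2 hTN hij h
    rw [hj] at hm
    nlinarith
  · -- ℓ < p : rows j, k, cols ℓ, p
    have hm := tn_minor2 hTN hjk h
    rw [hj] at hm
    nlinarith
end
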